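/- arXiv:0807.1329 — 4 statements merged into one kernel-verified Lean document; each statement's English description precedes it below -/
import Mathlib

section
/- Let F : C ⥤ D be a functor between categories which admits an ambidextrous adjunction. Then the group of natural automorphisms of F acts freely and transitively on the set of isomorphism classes of ambidextrous adjunctions for F by twisting the left-adjoint structure: for any two ambidextrous adjunctions A₁ = ⟨F₁, η₁, ε₁, n₁, e₁⟩ and A₂ = ⟨F₂, η₂, ε₂, n₂, e₂⟩ for F there exists exactly one natural automorphism α : F ≅ F such that the twist of A₁ by α — the ambidextrous adjunction ⟨F₁, η₁, ε₁, n₁ composed with α whiskered on the F factor, e₁ precomposed with α⁻¹ whiskered on the F factor⟩ — admits a morphism of ambidextrous adjunctions to A₂. -/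
open CategoryTheory

/-- An ambidextrous adjunction for a functor `F : C ⥤ D`: a functor `F* : D ⥤ C` together
with an adjunction `F ⊣ F*` (with unit `η` and counit `ε`) and an adjunction `F* ⊣ F`
(with unit `n` and counit `e`). -/
structure AmbidextrousAdjunction {C D : Type*} [Category C] [Category D] (F : C ⥤ D) where
  /-- the ambidextrous adjoint `F*` -/
  right : D ⥤ C
  /-- the adjunction `F ⊣ F*`, bundling the unit `η` and counit `ε` -/
  adj : F ⊣ right
  /-- the adjunction `F* ⊣ F`, bundling the unit `n` and counit `e` -/
  coadj : right ⊣ F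

/-!
Both adjoint structures are rigid: a transformation between two right adjoints of the same
functor that is compatible with the units is the canonical comparison isomorphism. Applied to
`F ⊣ F₁` and `F ⊣ F₂` this forces `γ`; transporting `F₂ ⊣ F` along `γ` gives a second right
adjoint structure on `F` for `F₁`, and applied to it and `F₁ ⊣ F` the same rigidity forces `α`.
The counit conditions are then automatic, since units determine counits.
-/

namespace CategoryTheory.Adjunction

variable {C D : Type*} [Category C] [Category D] {F : C ⥤ D} {G G' : D ⥤ C}

theorem app_eq_of_unit_comp_whiskerLeft (adj₁ : F ⊣ G) (adj₂ : F ⊣ G') (t : G ⟶ G')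
    (h : adj₁.unit ≫ Functor.whiskerLeft F t = adj₂.unit) (d : D) :
    t.app d = adj₂.unit.app (G.obj d) ≫ G'.map (adj₁.counit.app d) := by
  have hunit := NatTrans.congr_app h (G.obj d)
  simp only [NatTrans.comp_app, Functor.whiskerLeft_app] at hunit
  rw [← hunit, Category.assoc, ← t.naturality, ← Category.assoc,
    adj₁.right_triangle_components]
  exact (Category.id_comp _).symm

theorem eq_rightAdjointUniq_hom (adj₁ : F ⊣ G) (adj₂ : F ⊣ G') (t : G ⟶ G')
    (h : adj₁.unit ≫ Functor.whiskerLeft F t = adj₂.unit) :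
    t = (rightAdjointUniq adj₁ adj₂).hom := by
  ext d
  rw [app_eq_of_unit_comp_whiskerLeft adj₁ adj₂ t h,
    app_eq_of_unit_comp_whiskerLeft adj₁ adj₂ _ (unit_rightAdjointUniq_hom adj₁ adj₂)]

end CategoryTheory.Adjunction

namespace AmbidextrousAdjunction

variable {C D : Type*} [Category C] [Category D] {F : C ⥤ D} (A₁ A₂ : AmbidextrousAdjunction F)

abbrev rightComparison : A₁.right ≅ A₂.right :=
  A₁.adj.rightAdjointUniq A₂.adj

abbrev twistingAut : F ≅ F :=
  A₁.coadj.rightAdjointUniq (A₂.coadj.ofNatIsoLeft (rightComparison A₁ A₂).symm)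

theorem twistingAut_spec :
    A₂.adj.unit = A₁.adj.unit ≫ Functor.whiskerLeft F (rightComparison A₁ A₂).hom ∧
    A₂.adj.counit = Functor.whiskerRight (rightComparison A₁ A₂).inv F ≫ A₁.adj.counit ∧
    A₂.coadj.unit = (A₁.coadj.unit ≫ Functor.whiskerLeft A₁.right (twistingAut A₁ A₂).hom) ≫
      Functor.whiskerRight (rightComparison A₁ A₂).hom F ∧
    A₂.coadj.counit = Functor.whiskerLeft F (rightComparison A₁ A₂).inv ≫
      (Functor.whiskerRight (twistingAut A₁ A₂).inv A₁.right ≫ A₁.coadj.counit) := by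
  have hα_unit := Adjunction.unit_rightAdjointUniq_hom A₁.coadj
    (A₂.coadj.ofNatIsoLeft (rightComparison A₁ A₂).symm)
  have hα_counit := Adjunction.rightAdjointUniq_hom_counit A₁.coadj
    (A₂.coadj.ofNatIsoLeft (rightComparison A₁ A₂).symm)
  rw [Adjunction.ofNatIsoLeft_unit] at hα_unit
  rw [Adjunction.ofNatIsoLeft_counit] at hα_counit
  refine ⟨(Adjunction.unit_rightAdjointUniq_hom _ _).symm, ?_, ?_, ?_⟩
  · exact (Iso.eq_inv_comp (Functor.isoWhiskerRight _ F)).mpr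
      (Adjunction.rightAdjointUniq_hom_counit _ _)
  · rw [twistingAut, hα_unit]
    exact (Iso.comp_inv_eq (Functor.isoWhiskerRight _ F)).mp rfl
  · exact (Iso.eq_inv_comp (Functor.isoWhiskerLeft F _)).mpr
      ((Iso.eq_inv_comp (Functor.isoWhiskerRight (twistingAut A₁ A₂) A₁.right)).mpr hα_counit)

theorem eq_twistingAut {α : F ≅ F} {γ : A₁.right ≅ A₂.right}
    (hadj_unit : A₂.adj.unit = A₁.adj.unit ≫ Functor.whiskerLeft F γ.hom)
    (hcoadj_unit : A₂.coadj.unit =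
      (A₁.coadj.unit ≫ Functor.whiskerLeft A₁.right α.hom) ≫ Functor.whiskerRight γ.hom F) :
    α = twistingAut A₁ A₂ := by
  obtain rfl : γ = rightComparison A₁ A₂ :=
    Iso.ext (Adjunction.eq_rightAdjointUniq_hom _ _ _ hadj_unit.symm)
  exact Iso.ext (Adjunction.eq_rightAdjointUniq_hom _ _ _
    ((Iso.eq_comp_inv (Functor.isoWhiskerRight _ F)).mpr hcoadj_unit.symm))

end AmbidextrousAdjunction

/-- **Free and transitive action of `Aut(F)` on classes of ambidextrous adjunctions.**
Given two ambidextrous adjunctions `A₁ = ⟨F₁, η₁, ε₁, n₁, e₁⟩` and `A₂ = ⟨F₂, η₂, ε₂, n₂, e₂⟩`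
for `F`, there is exactly one natural automorphism `α : F ≅ F` such that the twist of `A₁`
by `α` — obtained by replacing `n₁` by its composite with `α` whiskered on the `F` factor and
`e₁` by its precomposite with `α⁻¹` whiskered on the `F` factor — admits a morphism of
ambidextrous adjunctions `γ` to `A₂`. -/
theorem ambijunction_aut_action_free_transitive {C D : Type*} [Category C] [Category D]
    {F : C ⥤ D} (A₁ A₂ : AmbidextrousAdjunction F) :
    ∃! α : F ≅ F, ∃ γ : A₁.right ≅ A₂.right,
      A₂.adj.unit = A₁.adj.unit ≫ Functor.whiskerLeft F γ.hom ∧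
      A₂.adj.counit = Functor.whiskerRight γ.inv F ≫ A₁.adj.counit ∧
      A₂.coadj.unit = (A₁.coadj.unit ≫ Functor.whiskerLeft A₁.right α.hom) ≫ Functor.whiskerRight γ.hom F ∧
      A₂.coadj.counit =
        Functor.whiskerLeft F γ.inv ≫ (Functor.whiskerRight α.inv A₁.right ≫ A₁.coadj.counit) := by
  refine ⟨A₁.twistingAut A₂, ⟨_, A₁.twistingAut_spec A₂⟩, ?_⟩
  rintro α ⟨γ, hadj_unit, -, hcoadj_unit, -⟩
  exact A₁.eq_twistingAut A₂ hadj_unit hcoadj_unit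
end

section
/- Let k be a field, I a finite index type, σ : I ≃ I a permutation of I, V : I → Type a family of finite-dimensional k-vector spaces, and f : Π i, V i →ₗ[k] V (σ i) a family of linear maps. Let F : (⨁ i, V i) →ₗ[k] (⨁ i, V i) be the unique linear endomorphism of the direct sum whose restriction to the i-th summand is f i followed by the inclusion of the σ(i)-th summand. Then the trace of F localizes on the fixed points of σ: trace(F) = Σ_{i : σ i = i} trace(f i), where for a fixed point i of σ the map f i is regarded as an endomorphism of V i by transporting along the equality σ i = i. -/
/-!
Since `∑ i, lof i ∘ component i = id` and trace is invariant under cyclic permutation, the trace of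
an endomorphism `F` of a finite direct sum is the sum of the traces of its diagonal blocks
`component i ∘ F ∘ lof i`. For the `F` of the theorem that block is `component i ∘ lof (σ i) ∘ f i`,
which vanishes unless `σ i = i`, and is `f i` itself when it does.
-/

open DirectSum

theorem Fintype.sum_dite_eq_sum_subtype {ι M : Type*} [Fintype ι] [AddCommMonoid M]
    (p : ι → Prop) [DecidablePred p] (f : ∀ i, p i → M) :
    ∑ i, (if h : p i then f i h else 0) = ∑ i : {i // p i}, f i.1 i.2 := by
  have h_neg : ∑ i : {i // ¬p i}, (if h : p i then f i h else 0) = 0 :=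
    Fintype.sum_eq_zero _ fun i => dif_neg i.2
  rw [← Fintype.sum_subtype_add_sum_subtype p, h_neg, add_zero]
  exact Fintype.sum_congr _ _ fun i => dif_pos i.2

section

variable {R : Type*} [Semiring R] {ι : Type*} [DecidableEq ι]
  {M : ι → Type*} [∀ i, AddCommMonoid (M i)] [∀ i, Module R (M i)]

theorem DirectSum.sum_lof_comp_component [Fintype ι] :
    ∑ i, lof R ι M i ∘ₗ component R ι M i = LinearMap.id := by
  refine LinearMap.ext fun x => ?_
  simp only [LinearMap.sum_apply, LinearMap.comp_apply, LinearMap.id_apply, lof_eq_of,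
    ← apply_eq_component]
  exact sum_univ_of x

theorem DirectSum.component_comp_lof_comp {N : Type*} [AddCommMonoid N] [Module R N] {i j : ι}
    (g : N →ₗ[R] M j) :
    component R ι M i ∘ₗ lof R ι M j ∘ₗ g =
      if h : j = i then cast (congrArg (fun t => N →ₗ[R] M t) h) g else 0 := by
  rw [← LinearMap.comp_assoc, component_comp_lof]
  split_ifs with h
  · subst h; rfl
  · exact LinearMap.zero_comp g

end

theorem LinearMap.trace_eq_sum_trace_component_comp_lof {R : Type*} [CommRing R] {ι : Type*} [Fintype ι]
    [DecidableEq ι] {M : ι → Type*} [∀ i, AddCommGroup (M i)] [∀ i, Module R (M i)]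
    [∀ i, Module.Free R (M i)] [∀ i, Module.Finite R (M i)]
    (F : (⨁ i, M i) →ₗ[R] ⨁ i, M i) :
    trace R (⨁ i, M i) F = ∑ i, trace R (M i) (component R ι M i ∘ₗ F ∘ₗ lof R ι M i) := by
  calc trace R (⨁ i, M i) F
      = trace R (⨁ i, M i) (F ∘ₗ ∑ i, lof R ι M i ∘ₗ component R ι M i) := by
        rw [sum_lof_comp_component, comp_id]
    _ = ∑ i, trace R (⨁ i, M i) ((F ∘ₗ lof R ι M i) ∘ₗ component R ι M i) := by
        rw [← Module.End.mul_eq_comp, Finset.mul_sum, map_sum]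
        rfl
    _ = _ := Finset.sum_congr rfl fun i _ => trace_comp_comm' _ _

/-- **Trace localizes on fixed points.**
Let `σ` be a permutation of a finite index type `I`, `V i` a family of finite-dimensional
`k`-vector spaces, and `f i : V i →ₗ[k] V (σ i)` a family of linear maps.  If
`F : (⨁ i, V i) →ₗ[k] (⨁ i, V i)` restricts on the `i`-th summand to `f i` followed by the
inclusion of the `σ i`-th summand, then
`trace F = ∑_{i : σ i = i} trace (f i)`, where for a fixed point `i` the map `f i` is regarded
as an endomorphism of `V i` by transporting along `σ i = i`. -/
theorem trace_localizes_on_fixed_points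
    {k : Type*} [Field k] {I : Type*} [Fintype I] [DecidableEq I]
    (σ : I ≃ I)
    (V : I → Type*) [∀ i, AddCommGroup (V i)] [∀ i, Module k (V i)]
    [∀ i, FiniteDimensional k (V i)]
    (f : ∀ i, V i →ₗ[k] V (σ i))
    (F : (⨁ i, V i) →ₗ[k] (⨁ i, V i))
    (hF : ∀ (i : I) (v : V i),
      F (DirectSum.lof k I V i v) = DirectSum.lof k I V (σ i) (f i v)) :
    LinearMap.trace k (⨁ i, V i) F =
      ∑ i : {i : I // σ i = i},
        LinearMap.trace k (V i.1)
          (cast (congrArg (fun t => V i.1 →ₗ[k] V t) i.2) (f i.1)) := by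
  have hF' : ∀ i, F ∘ₗ lof k I V i = lof k I V (σ i) ∘ₗ f i := fun i => LinearMap.ext (hF i)
  simp only [LinearMap.trace_eq_sum_trace_component_comp_lof, hF', component_comp_lof_comp, apply_dite, map_zero]
  exact Fintype.sum_dite_eq_sum_subtype _ _
end

section
/- Let G be a group. Define a category E(G) whose objects are pairs (F, u) where F is a ℂ-linear additive endofunctor of the category of finite-dimensional complex vector spaces and u : G →* Aut(F) is a group homomorphism from G to the group of natural automorphisms of F, and whose morphisms (F, u) → (F', u') are natural transformations θ : F ⟶ F' satisfying θ ∘ u(g) = u'(g) ∘ θ for all g ∈ G. Then E(G) is equivalent to the category of finite-dimensional complex representations of G. (This realizes the endomorphism category of the trivial unitary 2-representation of G as Rep(G).) -/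
/-!
A linear additive endofunctor `F` of finite-dimensional vector spaces is `- ⊗ F(𝟙)`: the
evaluation `W ⊗ F(𝟙) → F(W)`, `w ⊗ x ↦ F(c ↦ c • w) x`, is natural in `W` and in `F`, and is
the left unitor at `W = 𝟙`. A basis writes `𝟙 W` as a finite sum of maps factoring through `𝟙`,
and additivity transports invertibility from `𝟙` to every `W`. So natural transformations
`F ⟶ F'` are exactly the linear maps `F(𝟙) ⟶ F'(𝟙)`, which makes `(F, u) ↦ (F(𝟙), g ↦ u(g)_𝟙)`
fully faithful; a representation `V` is attained by `(- ⊗ V, g ↦ - ◁ ρ(g))`.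
-/

open CategoryTheory

/-- An object of the endomorphism category of the trivial unitary 2-representation of `G`:
a ℂ-linear additive endofunctor `F` of the category of finite-dimensional complex vector
spaces, together with a group homomorphism `u : G →* Aut F` from `G` to the group of natural
automorphisms of `F`. -/
structure TwoRepEnd (G : Type) [Group G] where
  /-- the underlying endofunctor -/
  F : FGModuleCat ℂ ⥤ FGModuleCat ℂ
  /-- `F` is additive -/
  additive : F.Additive
  /-- `F` is ℂ-linear on hom-spaces -/
  linear : F.Linear ℂ
  /-- the coherent action of `G` on `F` by natural automorphisms -/
  u : G →* Aut F

variable {G : Type} [Group G]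

instance : Category (TwoRepEnd G) where
  Hom A B := {θ : A.F ⟶ B.F // ∀ g : G, (A.u g).hom ≫ θ = θ ≫ (B.u g).hom}
  id A := ⟨𝟙 A.F, fun g => by simp⟩
  comp {A B C} f g := ⟨f.1 ≫ g.1, fun k => by
    rw [← Category.assoc, f.2 k, Category.assoc, g.2 k, Category.assoc]⟩
  id_comp f := Subtype.ext (Category.id_comp f.1)
  comp_id f := Subtype.ext (Category.comp_id f.1)
  assoc f g h := Subtype.ext (Category.assoc f.1 g.1 h.1)

open MonoidalCategory

universe u

namespace CategoryTheory.NatTrans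

variable {C D : Type*} [Category C] [Category D] [Preadditive C] [Preadditive D]
  {F₁ F₂ : C ⥤ D} [F₁.Additive] [F₂.Additive]

theorem isIso_app_of_sum_comp_eq_id (α : F₁ ⟶ F₂) {U W : C} [IsIso (α.app U)] {ι : Type*}
    (s : Finset ι) (p : ι → (W ⟶ U)) (i : ι → (U ⟶ W)) (h : ∑ j ∈ s, p j ≫ i j = 𝟙 W) :
    IsIso (α.app W) := by
  refine ⟨∑ j ∈ s, F₂.map (p j) ≫ inv (α.app U) ≫ F₁.map (i j), ?_, ?_⟩
  · simp only [Preadditive.comp_sum, ← naturality_assoc, IsIso.hom_inv_id_assoc, ← F₁.map_comp,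
      ← F₁.map_sum, h, F₁.map_id]
  · simp only [Preadditive.sum_comp, Category.assoc, naturality, IsIso.inv_hom_id_assoc,
      ← F₂.map_comp, ← F₂.map_sum, h, F₂.map_id]

end CategoryTheory.NatTrans

namespace FGModuleCat

variable {K : Type u} [Field K]

@[simp]
theorem hom_hom_add {V W : FGModuleCat K} (f g : V ⟶ W) :
    (f + g).hom.hom = f.hom.hom + g.hom.hom := rfl

@[simp]
theorem hom_hom_smul {V W : FGModuleCat K} (c : K) (f : V ⟶ W) :
    (c • f).hom.hom = c • f.hom.hom := rfl

@[simp]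
theorem hom_hom_sum {V W : FGModuleCat K} {ι : Type*} (s : Finset ι) (f : ι → (V ⟶ W)) :
    (∑ j ∈ s, f j).hom.hom = ∑ j ∈ s, (f j).hom.hom := by
  rw [← ModuleCat.hom_sum]
  exact congrArg ModuleCat.Hom.hom (map_sum InducedCategory.homAddEquiv f s)

def toSpanSingleton {W : FGModuleCat K} (w : W) : 𝟙_ (FGModuleCat K) ⟶ W :=
  ofHom (LinearMap.toSpanSingleton K W w)

@[simp]
theorem toSpanSingleton_hom_hom {W : FGModuleCat K} (w : W) :
    (toSpanSingleton w).hom.hom = LinearMap.toSpanSingleton K W w := rfl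

theorem exists_sum_comp_eq_id (W : FGModuleCat K) :
    ∃ (n : ℕ) (p : Fin n → (W ⟶ 𝟙_ (FGModuleCat K))) (i : Fin n → (𝟙_ (FGModuleCat K) ⟶ W)),
      ∑ j, p j ≫ i j = 𝟙 W := by
  let b := Module.finBasis K W
  refine ⟨_, fun j => ofHom (b.coord j), fun j => toSpanSingleton (b j), ?_⟩
  ext w
  simp only [hom_hom_sum, hom_hom_comp, toSpanSingleton_hom_hom, hom_hom_id, LinearMap.sum_apply]
  exact b.sum_repr w

theorem toSpanSingleton_comp {W W' : FGModuleCat K} (w : W) (f : W ⟶ W') :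
    toSpanSingleton w ≫ f = toSpanSingleton (f.hom.hom w) := by
  ext
  simp

theorem toSpanSingleton_add {W : FGModuleCat K} (w w' : W) :
    toSpanSingleton (w + w') = toSpanSingleton w + toSpanSingleton w' := by
  ext
  simp

theorem toSpanSingleton_smul {W : FGModuleCat K} (c : K) (w : W) :
    toSpanSingleton (c • w) = c • toSpanSingleton w := by
  ext
  simp

theorem toSpanSingleton_tensorUnit (c : K) :
    toSpanSingleton (W := 𝟙_ (FGModuleCat K)) c = c • 𝟙 _ := by
  ext
  simp

variable (F : FGModuleCat K ⥤ FGModuleCat K) [F.Additive] [F.Linear K]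

def mapToSpanSingleton (W : FGModuleCat K) : W →ₗ[K] F.obj (𝟙_ _) →ₗ[K] F.obj W where
  toFun w := (F.map (toSpanSingleton w)).hom.hom
  map_add' w w' := by simp [toSpanSingleton_add]
  map_smul' c w := by simp [toSpanSingleton_smul]

def tensorUnitEval : (tensoringRight (FGModuleCat K)).obj (F.obj (𝟙_ _)) ⟶ F where
  app W := ConcreteCategory.ofHom (C := FGModuleCat K)
    (TensorProduct.lift (mapToSpanSingleton F W))
  naturality W W' f := by
    refine hom_ext <| TensorProduct.ext' fun w x => ?_
    show (F.map (toSpanSingleton (f.hom.hom w))).hom.hom x =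
      (F.map (toSpanSingleton w) ≫ F.map f).hom.hom x
    rw [← toSpanSingleton_comp, F.map_comp]

@[simp]
theorem tensorUnitEval_app_tmul (W : FGModuleCat K) (w : W) (x : F.obj (𝟙_ _)) :
    ((tensorUnitEval F).app W).hom.hom (w ⊗ₜ[K] x) = (F.map (toSpanSingleton w)).hom.hom x := rfl

theorem tensorUnitEval_app_tensorUnit :
    (tensorUnitEval F).app (𝟙_ _) = (λ_ (F.obj (𝟙_ _))).hom := by
  refine hom_ext <| TensorProduct.ext' fun c x => ?_
  rw [tensorUnitEval_app_tmul, toSpanSingleton_tensorUnit, F.map_smul, F.map_id]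
  rfl

instance isIso_tensorUnitEval_app (W : FGModuleCat K) : IsIso ((tensorUnitEval F).app W) := by
  have : IsIso ((tensorUnitEval F).app (𝟙_ _)) := tensorUnitEval_app_tensorUnit F ▸ inferInstance
  obtain ⟨n, p, i, h⟩ := exists_sum_comp_eq_id W
  exact NatTrans.isIso_app_of_sum_comp_eq_id _ _ p i h

instance : IsIso (tensorUnitEval F) := NatIso.isIso_of_isIso_app _

variable {F} {F' : FGModuleCat K ⥤ FGModuleCat K} [F'.Additive] [F'.Linear K]

theorem tensorUnitEval_comp (θ : F ⟶ F') :
    tensorUnitEval F ≫ θ = (tensoringRight _).map (θ.app (𝟙_ _)) ≫ tensorUnitEval F' := by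
  ext W : 2
  refine hom_ext <| TensorProduct.ext' fun w x => ?_
  show (F.map (toSpanSingleton w) ≫ θ.app W).hom.hom x =
    (θ.app _ ≫ F'.map (toSpanSingleton w)).hom.hom x
  rw [θ.naturality]

@[simps apply]
noncomputable def natTransEquivAppTensorUnit : (F ⟶ F') ≃ (F.obj (𝟙_ _) ⟶ F'.obj (𝟙_ _)) where
  toFun θ := θ.app (𝟙_ _)
  invFun φ := inv (tensorUnitEval F) ≫ (tensoringRight _).map φ ≫ tensorUnitEval F'
  left_inv θ := by
    simp only [← tensorUnitEval_comp, IsIso.inv_hom_id_assoc]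
  right_inv φ := by
    simp only [NatTrans.comp_app, NatIso.isIso_inv_app, tensorUnitEval_app_tensorUnit,
      IsIso.inv_comp_eq]
    exact leftUnitor_naturality φ

end FGModuleCat

attribute [local instance] TwoRepEnd.additive TwoRepEnd.linear

namespace TwoRepEnd

open FGModuleCat

noncomputable def toFDRep : TwoRepEnd G ⥤ FDRep ℂ G where
  obj A := ⟨A.F.obj (𝟙_ _),
    (Aut.toEnd _).comp ((((evaluation _ _).obj (𝟙_ _)).mapAut A.F).comp A.u)⟩
  map θ := ⟨θ.1.app (𝟙_ _), fun g => NatTrans.congr_app (θ.2 g) _⟩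

noncomputable def fullyFaithfulToFDRep : (toFDRep (G := G)).FullyFaithful where
  preimage f := ⟨natTransEquivAppTensorUnit.symm f.hom, fun g =>
    natTransEquivAppTensorUnit.injective <| by
      have h : (natTransEquivAppTensorUnit.symm f.hom).app (𝟙_ _) = f.hom :=
        natTransEquivAppTensorUnit.apply_symm_apply f.hom
      simp only [natTransEquivAppTensorUnit_apply, NatTrans.comp_app, h]
      exact f.comm g⟩
  map_preimage f := by
    ext1
    exact natTransEquivAppTensorUnit.apply_symm_apply f.hom
  preimage_map θ := Subtype.ext (natTransEquivAppTensorUnit.symm_apply_apply θ.1)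

def ofFDRep (X : FDRep ℂ G) : TwoRepEnd G where
  F := (tensoringRight _).obj X.V
  additive := inferInstance
  linear := inferInstance
  u := (Functor.mapAut X.V (tensoringRight _)).comp (Action.ρAut X)

noncomputable def toFDRepObjOfFDRepIso (X : FDRep ℂ G) : toFDRep.obj (ofFDRep X) ≅ X :=
  Action.mkIso (λ_ X.V) fun g => leftUnitor_naturality (Action.ρ X g)

instance : (toFDRep (G := G)).IsEquivalence where
  faithful := fullyFaithfulToFDRep.faithful
  full := fullyFaithfulToFDRep.full
  essSurj := ⟨fun X => ⟨ofFDRep X, ⟨toFDRepObjOfFDRepIso X⟩⟩⟩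

end TwoRepEnd

/-- **The endomorphism category of the trivial 2-representation is `Rep(G)`.**
The category of pairs `(F, u)`, where `F` is a ℂ-linear additive endofunctor of the category
of finite-dimensional complex vector spaces and `u : G →* Aut F`, with morphisms the natural
transformations commuting with the `G`-actions, is equivalent to the category of
finite-dimensional complex representations of `G`. -/
theorem twoRepEnd_equivalence_fdRep :
    Nonempty (TwoRepEnd G ≌ FDRep ℂ G) :=
  ⟨TwoRepEnd.toFDRep.asEquivalence⟩
end

section
/- Let G be a finite group acting on a finite set X. Let P := {(i, x) ∈ X × G | x • i = i} with the G-action g • (i, x) := (g • i, g x g⁻¹), and let L be a functor from the action groupoid of G acting on P to the category of finite-dimensional complex vector spaces. For x ∈ G define ch(x) := ⨁_{i ∈ X, x • i = i} L(i, x), and for g ∈ G define a linear map ch(g)_x : ch(x) → ch(gxg⁻¹) whose restriction to the (i)-th summand is the map L applied to the morphism g : (i, x) → (g • i, g x g⁻¹) of the action groupoid, followed by inclusion of the (g • i)-th summand. Then ch(1)_x is the identity and ch(g₂)_{g₁ x g₁⁻¹} ∘ ch(g₁)_x = ch(g₂g₁)_x for all g₁, g₂, x ∈ G; that is, the push-forward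 x ↦ ch(x) together with the maps ch(g) defines a functor from the action groupoid of G acting on itself by conjugation to the category of finite-dimensional complex vector spaces (an equivariant vector bundle over G). -/
open CategoryTheory DirectSum

/-- The set `P` of pairs `(i, x)` with `x • i = i`, for a group `G` acting on a set `X`. -/
abbrev PFix (G X : Type) [Group G] [MulAction G X] : Type := {p : X × G // p.2 • p.1 = p.1}

variable {G X : Type} [Group G] [Fintype G] [Fintype X] [DecidableEq X] [MulAction G X]

/-- The `G`-action `g • (i, x) := (g • i, g x g⁻¹)` on `P`. -/
instance : SMul G (PFix G X) :=
  ⟨fun g p => ⟨(g • p.1.1, g * p.1.2 * g⁻¹), by rw [mul_smul, inv_smul_smul, mul_smul, p.2]⟩⟩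

lemma pfix_smul_def (g : G) (p : PFix G X) :
    (g • p : PFix G X).1 = (g • p.1.1, g * p.1.2 * g⁻¹) := rfl

instance : MulAction G (PFix G X) where
  one_smul p := Subtype.ext (by rw [pfix_smul_def]; simp)
  mul_smul g h p := Subtype.ext (by
    rw [pfix_smul_def, pfix_smul_def, pfix_smul_def]
    simp [mul_smul, mul_assoc])

/-- The fixed points of `x : G` acting on `X`. -/
abbrev FixPts (x : G) (X : Type) [MulAction G X] : Type := {i : X // x • i = i}

variable (L : ActionCategory G (PFix G X) ⥤ FGModuleCat ℂ)

/-- The object of the action groupoid of `P` corresponding to a fixed point `i` of `x`. -/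
def pobj (x : G) (i : FixPts x X) : ActionCategory G (PFix G X) :=
  ActionCategory.objEquiv G (PFix G X) ⟨(i.1, x), i.2⟩

/-- The fiber `ch(x) = ⨁_{i ∈ X, x • i = i} L (i, x)` of the geometric character. -/
def ch (x : G) : Type := ⨁ (i : FixPts x X), ↑(L.obj (pobj x i))

noncomputable instance (x : G) : AddCommGroup (ch L x) := by unfold ch; infer_instance
noncomputable instance (x : G) : Module ℂ (ch L x) := by unfold ch; infer_instance

/-- `g` maps fixed points of `x` to fixed points of `g x g⁻¹`. -/
def fixConj (g x : G) (i : FixPts x X) : FixPts (g * x * g⁻¹) X :=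
  ⟨g • i.1, by rw [mul_smul, inv_smul_smul, mul_smul, i.2]⟩

/-- The morphism `g : (i, x) → (g • i, g x g⁻¹)` of the action groupoid of `P`. -/
def actHom (g x : G) (i : FixPts x X) :
    pobj x i ⟶ pobj (g * x * g⁻¹) (fixConj g x i) :=
  ⟨g, Subtype.ext rfl⟩

/-- The linear map `ch(g)_x : ch(x) → ch(g x g⁻¹)` whose restriction to the `i`-th summand
is `L` applied to the morphism `g : (i, x) → (g • i, g x g⁻¹)` of the action groupoid,
followed by the inclusion of the `g • i`-th summand. -/
noncomputable def chMap (g x : G) : ch L x →ₗ[ℂ] ch L (g * x * g⁻¹) :=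
  DirectSum.toModule ℂ (FixPts x X) (ch L (g * x * g⁻¹)) fun i =>
    (DirectSum.lof ℂ (FixPts (g * x * g⁻¹) X)
        (fun j => ↑(L.obj (pobj (g * x * g⁻¹) j))) (fixConj g x i)).comp
      ((L.map (actHom g x i)).hom.hom :
        ↑(L.obj (pobj x i)) →ₗ[ℂ] ↑(L.obj (pobj (g * x * g⁻¹) (fixConj g x i))))


/-!
On the summand of `(i, x)` both identities are the functoriality of `L`. The only obstacle is
that `1 * x * 1⁻¹` and `g₂ * (g₁ * x * g₁⁻¹) * g₂⁻¹` are merely propositionally equal to `x`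
and `(g₂ * g₁) * x * (g₂ * g₁)⁻¹`. Generalising the target of `ch(g)_x` to `ch(y)` for any `y`
proven equal to `g * x * g⁻¹` (`chMapOfConj`) lets the equation be substituted away, turning the
heterogeneous equalities into ordinary ones.
-/

noncomputable def chIncl (x : G) (i : FixPts x X) : L.obj (pobj x i) →ₗ[ℂ] ch L x :=
  DirectSum.lof ℂ (FixPts x X) (fun k => ↑(L.obj (pobj x k))) i

lemma ch_linearMap_ext {x : G} {M : Type*} [AddCommMonoid M] [Module ℂ M]
    {f f' : ch L x →ₗ[ℂ] M} (h : ∀ i v, f (chIncl L x i v) = f' (chIncl L x i v)) : f = f' :=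
  DirectSum.linearMap_ext ℂ fun i => LinearMap.ext (h i)

lemma chIncl_map_congr {a : ActionCategory G (PFix G X)} {y : G} {j j' : FixPts y X}
    (hj : j = j') (f : a ⟶ pobj y j) (f' : a ⟶ pobj y j') (hf : f.val = f'.val) (v : L.obj a) :
    chIncl L y j (L.map f v) = chIncl L y j' (L.map f' v) := by
  subst hj
  rw [Subtype.ext hf]

def fixConjOf (g x y : G) (h : g * x * g⁻¹ = y) (i : FixPts x X) : FixPts y X :=
  ⟨g • i.1, by rw [← h, mul_smul, inv_smul_smul, mul_smul, i.2]⟩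

def actHomOf (g x y : G) (h : g * x * g⁻¹ = y) (i : FixPts x X) :
    pobj x i ⟶ pobj y (fixConjOf g x y h i) :=
  ⟨g, Subtype.ext (by subst h; rfl)⟩

noncomputable def chMapOfConj (g x y : G) (h : g * x * g⁻¹ = y) : ch L x →ₗ[ℂ] ch L y :=
  DirectSum.toModule ℂ (FixPts x X) (ch L y) fun i =>
    (chIncl L y (fixConjOf g x y h i)).comp (L.map (actHomOf g x y h i)).hom.hom

lemma chMap_eq_chMapOfConj (g x : G) : chMap L g x = chMapOfConj L g x _ rfl := rfl

lemma chMapOfConj_heq {g x y y' : G} (h : g * x * g⁻¹ = y) (h' : g * x * g⁻¹ = y') :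
    HEq (chMapOfConj L g x y h) (chMapOfConj L g x y' h') := by
  subst h h'
  rfl

lemma chMapOfConj_chIncl (g x y : G) (h : g * x * g⁻¹ = y) (i : FixPts x X)
    (v : L.obj (pobj x i)) :
    chMapOfConj L g x y h (chIncl L x i v) =
      chIncl L y (fixConjOf g x y h i) (L.map (actHomOf g x y h i) v) :=
  DirectSum.toModule_lof ℂ (M := fun k => ↑(L.obj (pobj x k))) i v

lemma chMapOfConj_one (x : G) (h : 1 * x * 1⁻¹ = x) : chMapOfConj L 1 x x h = LinearMap.id := by
  refine ch_linearMap_ext L fun i v => ?_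
  rw [chMapOfConj_chIncl, LinearMap.id_apply,
    chIncl_map_congr L (Subtype.ext (one_smul G i.1)) (actHomOf 1 x x h i) (𝟙 _) rfl,
    L.map_id]
  rfl

lemma chMapOfConj_comp {g₁ g₂ x y z : G} (h₁ : g₁ * x * g₁⁻¹ = y) (h₂ : g₂ * y * g₂⁻¹ = z)
    (h : (g₂ * g₁) * x * (g₂ * g₁)⁻¹ = z) :
    (chMapOfConj L g₂ y z h₂).comp (chMapOfConj L g₁ x y h₁) = chMapOfConj L (g₂ * g₁) x z h := by
  refine ch_linearMap_ext L fun i v => ?_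
  rw [LinearMap.comp_apply, chMapOfConj_chIncl, chMapOfConj_chIncl, chMapOfConj_chIncl,
    chIncl_map_congr L (Subtype.ext (mul_smul g₂ g₁ i.1)) (actHomOf (g₂ * g₁) x z h i)
      (actHomOf g₁ x y h₁ i ≫ actHomOf g₂ y z h₂ _) rfl,
    L.map_comp]
  rfl

/-- **Functoriality of the geometric character.**
`ch(1)_x` is the identity and `ch(g₂)_{g₁ x g₁⁻¹} ∘ ch(g₁)_x = ch(g₂ g₁)_x`; that is, the
push-forward `x ↦ ch(x)` together with the maps `ch(g)` defines a functor from the action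
groupoid of `G` acting on itself by conjugation to the category of finite-dimensional
complex vector spaces (an equivariant vector bundle over `G`). -/
theorem geometric_character_functorial :
    (∀ x : G, HEq (chMap L 1 x) (LinearMap.id : ch L x →ₗ[ℂ] ch L x)) ∧
    (∀ g₂ g₁ x : G,
      HEq ((chMap L g₂ (g₁ * x * g₁⁻¹)).comp (chMap L g₁ x)) (chMap L (g₂ * g₁) x)) := by
  refine ⟨fun x => ?_, fun g₂ g₁ x => ?_⟩
  · rw [chMap_eq_chMapOfConj, ← chMapOfConj_one L x (by group)]
    exact chMapOfConj_heq L _ _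
  · rw [chMap_eq_chMapOfConj, chMap_eq_chMapOfConj, chMap_eq_chMapOfConj,
      chMapOfConj_comp L rfl rfl (by group)]
    exact chMapOfConj_heq L _ _
end
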